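/- Let W be a monotone sequentially complete vector lattice with a faithful positive linear functional ψ. If V is a monotone sequentially closed linear subspace of W and J ⊆ V is nonempty, upward directed, and bounded above in W, then the supremum of J in W lies in V and is also the supremum of J in V. -/

import Mathlib

/-!
Choose `f n ∈ J` increasing with `ψ (f n)` approaching `sup ψ(J)`, and let `s` be the supremum of
the `f n`, which lies in `V` by closedness. For `w ∈ J` and `y ∈ J` above `w` and `f n`,
`(w - s)⁺ ≤ w ⊔ f n - f n ≤ y - f n`, so `ψ (w - s)⁺` is arbitrarily small, hence zero, and
faithfulness gives `w ≤ s`.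
-/

section DirectedSequence

variable {α : Type*} [Preorder α] {J : Set α}

lemma DirectedOn.exists_monotone_seq_ge (hJ : DirectedOn (· ≤ ·) J) {x : ℕ → α}
    (hx : ∀ n, x n ∈ J) : ∃ f : ℕ → α, Monotone f ∧ (∀ n, f n ∈ J) ∧ ∀ n, x n ≤ f n := by
  have step : ∀ (p : J) (n : ℕ), ∃ q : J, (p : α) ≤ q ∧ x n ≤ q := fun p n ↦ by
    obtain ⟨z, hz, hpz, hxz⟩ := hJ p p.2 (x n) (hx n)
    exact ⟨⟨z, hz⟩, hpz, hxz⟩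
  choose next hnext_ge hnext_x using step
  let g : ℕ → J := fun n ↦ Nat.rec ⟨x 0, hx 0⟩ (fun k p ↦ next p (k + 1)) n
  refine ⟨fun n ↦ (g n).1, monotone_nat_of_le_succ fun n ↦ hnext_ge (g n) (n + 1),
    fun n ↦ (g n).2, ?_⟩
  rintro (_ | n)
  · exact le_rfl
  · exact hnext_x (g n) (n + 1)

lemma DirectedOn.exists_monotone_seq_approx_sup (hJ : DirectedOn (· ≤ ·) J) (hJne : J.Nonempty)
    {g : α → ℝ} (hg : Monotone g) (hbdd : BddAbove (g '' J)) :
    ∃ f : ℕ → α, Monotone f ∧ (∀ n, f n ∈ J) ∧ ∀ ε > 0, ∃ n, ∀ y ∈ J, g y < g (f n) + ε := by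
  obtain ⟨u, -, hu_lim, hu_mem⟩ := exists_seq_tendsto_sSup (hJne.image g) hbdd
  choose x hxJ hxu using hu_mem
  obtain ⟨f, hf_mono, hfJ, hxf⟩ := hJ.exists_monotone_seq_ge hxJ
  refine ⟨f, hf_mono, hfJ, fun ε hε ↦ ?_⟩
  obtain ⟨n, hn⟩ := (hu_lim.eventually (Ioi_mem_nhds (sub_lt_self _ hε))).exists
  refine ⟨n, fun y hy ↦ ?_⟩
  have hy_le : g y ≤ sSup (g '' J) := le_csSup hbdd ⟨y, hy, rfl⟩
  have hxn : g (x n) ≤ g (f n) := hg (hxf n)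
  rw [hxu] at hxn
  linarith [show sSup (g '' J) - ε < u n from hn]

end DirectedSequence

section PositiveFunctional

variable {W : Type*} [Lattice W] [AddCommGroup W] [AddLeftMono W]
  (ψ : W →+ ℝ)

lemma AddMonoidHom.monotone_of_map_nonneg (hψpos : ∀ a : W, 0 ≤ a → 0 ≤ ψ a) : Monotone ψ :=
  fun a b hab ↦ by
    simpa [map_sub] using hψpos (b - a) (sub_nonneg.2 hab)

lemma le_of_forall_map_posPart_lt (hψpos : ∀ a : W, 0 ≤ a → 0 ≤ ψ a)
    (hψfaith : ∀ a : W, 0 ≤ a → a ≠ 0 → 0 < ψ a) {a b : W}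
    (h : ∀ ε > 0, ψ (a - b)⁺ < ε) : a ≤ b := by
  have hzero : ψ (a - b)⁺ = 0 :=
    le_antisymm (le_of_forall_pos_lt_add fun ε hε ↦ by simpa using h ε hε)
      (hψpos _ (posPart_nonneg _))
  by_contra hab
  have hpos : (a - b)⁺ ≠ 0 := by rwa [Ne, posPart_eq_zero, sub_nonpos]
  exact (hψfaith _ (posPart_nonneg _) hpos).ne' hzero

lemma DirectedOn.isLUB_of_isLUB_range (hψpos : ∀ a : W, 0 ≤ a → 0 ≤ ψ a)
    (hψfaith : ∀ a : W, 0 ≤ a → a ≠ 0 → 0 < ψ a)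
    {J : Set W} (hJ : DirectedOn (· ≤ ·) J) {f : ℕ → W} (hfJ : ∀ n, f n ∈ J)
    (hf : ∀ ε > 0, ∃ n, ∀ y ∈ J, ψ y < ψ (f n) + ε) {s : W} (hs : IsLUB (Set.range f) s) :
    IsLUB J s := by
  refine ⟨fun w hw ↦ le_of_forall_map_posPart_lt ψ hψpos hψfaith fun ε hε ↦ ?_,
    fun v hv ↦ hs.2 (upperBounds_mono_set (Set.range_subset_iff.2 hfJ) hv)⟩
  obtain ⟨n, hn⟩ := hf ε hε
  obtain ⟨y, hy, hwy, hfy⟩ := hJ w hw (f n) (hfJ n)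
  have hle : (w - s)⁺ ≤ y - f n :=
    calc (w - s)⁺ ≤ (w - f n)⁺ := posPart_mono (sub_le_sub_left (hs.1 ⟨n, rfl⟩) w)
      _ = w ⊔ f n - f n := by rw [posPart_def, sup_sub, sub_self]
      _ ≤ y - f n := sub_le_sub_right (sup_le hwy hfy) _
  have := ψ.monotone_of_map_nonneg hψpos hle
  rw [map_sub] at this
  linarith [hn y hy]

end PositiveFunctional

theorem stmt_12_general {W : Type*} [Lattice W] [AddCommGroup W] [Module ℝ W]
    [CovariantClass W W (· + ·) (· ≤ ·)]
    (ψ : W →ₗ[ℝ] ℝ)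
    (hψpos : ∀ a : W, 0 ≤ a → 0 ≤ ψ a)
    (hψfaith : ∀ a : W, 0 ≤ a → a ≠ 0 → 0 < ψ a)
    (hseq : ∀ f : ℕ → W, Monotone f → BddAbove (Set.range f) →
      ∃ s, IsLUB (Set.range f) s)
    (V : Submodule ℝ W)
    (hVclosed : ∀ f : ℕ → W, (∀ n, f n ∈ V) → Monotone f →
      BddAbove (Set.range f) → ∀ s : W, IsLUB (Set.range f) s → s ∈ V)
    (J : Set W) (hJV : J ⊆ V) (hJne : J.Nonempty)
    (hJdir : DirectedOn (· ≤ ·) J) (hJbdd : BddAbove J) :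
    ∃ s : W, IsLUB J s ∧ s ∈ V ∧
      ∀ v ∈ V, v ∈ upperBounds J → s ≤ v := by
  have hψmono : Monotone ψ := ψ.toAddMonoidHom.monotone_of_map_nonneg hψpos
  obtain ⟨f, hf_mono, hfJ, hf_approx⟩ :=
    hJdir.exists_monotone_seq_approx_sup hJne hψmono (hψmono.map_bddAbove hJbdd)
  have hf_bdd : BddAbove (Set.range f) := hJbdd.mono (Set.range_subset_iff.2 hfJ)
  obtain ⟨s, hs⟩ := hseq f hf_mono hf_bdd
  have hsJ : IsLUB J s :=
    hJdir.isLUB_of_isLUB_range ψ.toAddMonoidHom hψpos hψfaith hfJ hf_approx hs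
  exact ⟨s, hsJ, hVclosed f (fun n ↦ hJV (hfJ n)) hf_mono hf_bdd s hs,
    fun _ _ hv ↦ hsJ.2 hv⟩

/-- In a monotone sequentially complete vector lattice with a faithful positive
linear functional, if `V` is a monotone sequentially closed linear subspace and
`J ⊆ V` is nonempty, upward directed and bounded above in `W`, then the
supremum of `J` in `W` lies in `V` and is also the supremum of `J` in `V`. -/
theorem stmt_12 {W : Type*} [Lattice W] [AddCommGroup W] [Module ℝ W]
    [CovariantClass W W (· + ·) (· ≤ ·)] [PosSMulMono ℝ W]
    (ψ : W →ₗ[ℝ] ℝ)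
    (hψpos : ∀ a : W, 0 ≤ a → 0 ≤ ψ a)
    (hψfaith : ∀ a : W, 0 ≤ a → a ≠ 0 → 0 < ψ a)
    (hseq : ∀ f : ℕ → W, Monotone f → BddAbove (Set.range f) →
      ∃ s, IsLUB (Set.range f) s)
    (V : Submodule ℝ W)
    (hVclosed : ∀ f : ℕ → W, (∀ n, f n ∈ V) → Monotone f →
      BddAbove (Set.range f) → ∀ s : W, IsLUB (Set.range f) s → s ∈ V)
    (J : Set W) (hJV : J ⊆ V) (hJne : J.Nonempty)
    (hJdir : DirectedOn (· ≤ ·) J) (hJbdd : BddAbove J) :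
    ∃ s : W, IsLUB J s ∧ s ∈ V ∧
      ∀ v ∈ V, v ∈ upperBounds J → s ≤ v :=
  stmt_12_general ψ hψpos hψfaith hseq V hVclosed J hJV hJne hJdir hJbdd
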